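/- In a basic pseudo hoop M, for any subset X the polar X⊥ = {x ∈ M : x ∨ a = 1 for all a ∈ X} is a filter of M. -/
import Mathlib


universe u

structure PseudoHoop (M : Type u) where
  mul : M → M → M
  one : M
  imp : M → M → M
  rimp : M → M → M
  mul_one : ∀ x, mul x one = x
  one_mul : ∀ x, mul one x = x
  imp_self : ∀ x, imp x x = one
  rimp_self : ∀ x, rimp x x = one
  mul_imp : ∀ x y z, imp (mul x y) z = imp x (imp y z)
  mul_rimp : ∀ x y z, rimp (mul x y) z = rimp y (rimp x z)
  div1 : ∀ x y, mul (imp x y) x = mul (imp y x) y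
  div2 : ∀ x y, mul (imp x y) x = mul x (rimp x y)
  div3 : ∀ x y, mul x (rimp x y) = mul y (rimp y x)

namespace PseudoHoop

variable {M : Type u} (H : PseudoHoop M)

/-- The induced order: x ≤ y iff x → y = 1. -/
def le (x y : M) : Prop := H.imp x y = H.one

/-- The derived meet: x ∧ y = (x → y) ⊙ x. -/
def meet (x y : M) : M := H.mul (H.imp x y) x

/-- Powers: a^0 = 1, a^(n+1) = a^n ⊙ a. -/
def pow (a : M) : ℕ → M
  | 0 => H.one
  | n + 1 => H.mul (pow a n) a

/-- j is the least upper bound of x and y. -/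
def IsJoin (x y j : M) : Prop :=
  H.le x j ∧ H.le y j ∧ ∀ c, H.le x c → H.le y c → H.le j c

/-- Prelinearity: (x→y) ∨ (y→x) and (x⇝y) ∨ (y⇝x) exist and equal 1. -/
def Prelinear : Prop :=
  ∀ x y, H.IsJoin (H.imp x y) (H.imp y x) H.one ∧ H.IsJoin (H.rimp x y) (H.rimp y x) H.one

/-- Basic pseudo hoop. -/
def Basic : Prop :=
  (∀ x y z, H.le (H.imp (H.imp x y) z) (H.imp (H.imp (H.imp y x) z) z)) ∧
  (∀ x y z, H.le (H.rimp (H.rimp x y) z) (H.rimp (H.rimp (H.rimp y x) z) z))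

/-- Filters: contain 1, closed under ⊙ and upward closed. -/
def IsFilter (F : Set M) : Prop :=
  H.one ∈ F ∧ (∀ x ∈ F, ∀ y ∈ F, H.mul x y ∈ F) ∧ (∀ x ∈ F, ∀ y, H.le x y → y ∈ F)

/-- Filter generated by a set. -/
def filterGen (S : Set M) : Set M := ⋂₀ {F | H.IsFilter F ∧ S ⊆ F}

/-- Prime filter. -/
def IsPrime (F : Set M) : Prop :=
  H.IsFilter F ∧
    ∀ F₁ F₂, H.IsFilter F₁ → H.IsFilter F₂ → F₁ ∩ F₂ ⊆ F → F₁ ⊆ F ∨ F₂ ⊆ F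

/-- V is a value of g: a filter maximal with respect to not containing g. -/
def IsValueOf (V : Set M) (g : M) : Prop :=
  H.IsFilter V ∧ g ∉ V ∧ ∀ W, H.IsFilter W → V ⊆ W → g ∉ W → W = V

/-- V is a value of M: a value of some g ≠ 1. -/
def IsValue (V : Set M) : Prop := ∃ g, g ≠ H.one ∧ H.IsValueOf V g

end PseudoHoop

namespace PseudoHoop

variable {M : Type u} (H : PseudoHoop M)

lemma one_imp_fix (a b : M) : H.imp H.one (H.imp a b) = H.imp a b := by
  have h := H.mul_imp H.one a b
  rw [H.one_mul] at h; exact h.symm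

lemma one_rimp_fix (a b : M) : H.rimp H.one (H.rimp a b) = H.rimp a b := by
  have h := H.mul_rimp a H.one b
  rw [H.mul_one] at h; exact h.symm

lemma imp_antisymm {x y : M} (h1 : H.imp x y = H.one) (h2 : H.imp y x = H.one) :
    x = y := by
  have h := H.div1 x y
  rw [h1, h2, H.one_mul, H.one_mul] at h; exact h

lemma rimp_antisymm {x y : M} (h1 : H.rimp x y = H.one) (h2 : H.rimp y x = H.one) :
    x = y := by
  have h := H.div3 x y
  rw [h1, h2, H.mul_one, H.mul_one] at h; exact h

lemma imp_one_mul (x : M) : H.mul (H.imp x H.one) x = H.imp H.one x := by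
  have h := H.div1 x H.one
  rw [H.mul_one] at h; exact h

lemma one_imp_imp_one (z : M) : H.imp (H.imp H.one z) H.one = H.one := by
  rw [← H.imp_one_mul z, H.mul_imp, H.imp_self]

lemma one_imp (x : M) : H.imp H.one x = x := by
  apply H.imp_antisymm
  · rw [← H.imp_one_mul x, H.mul_imp, H.imp_self]
    rw [← H.one_imp_fix x H.one]
    exact H.one_imp_imp_one _
  · have h := H.mul_imp x H.one x
    rw [H.mul_one, H.imp_self] at h; exact h.symm

lemma imp_one (x : M) : H.imp x H.one = H.one := by
  have h : H.mul (H.imp x H.one) x = x := by rw [H.imp_one_mul, H.one_imp]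
  have h2 := H.mul_imp (H.imp x H.one) x H.one
  rw [h, H.imp_self] at h2
  exact h2

lemma rimp_one_mul (x : M) : H.mul x (H.rimp x H.one) = H.rimp H.one x := by
  have h := H.div3 x H.one
  rw [H.one_mul] at h; exact h

lemma one_rimp_rimp_one (z : M) : H.rimp (H.rimp H.one z) H.one = H.one := by
  rw [← H.rimp_one_mul z, H.mul_rimp, H.rimp_self]

lemma one_rimp (x : M) : H.rimp H.one x = x := by
  apply H.rimp_antisymm
  · rw [← H.rimp_one_mul x, H.mul_rimp, H.rimp_self]
    rw [← H.one_rimp_fix x H.one]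
    exact H.one_rimp_rimp_one _
  · have h := H.mul_rimp H.one x x
    rw [H.one_mul, H.rimp_self] at h; exact h.symm

lemma rimp_one (x : M) : H.rimp x H.one = H.one := by
  have h : H.mul x (H.rimp x H.one) = x := by rw [H.rimp_one_mul, H.one_rimp]
  have h2 := H.mul_rimp x (H.rimp x H.one) H.one
  rw [h, H.rimp_self] at h2
  exact h2

lemma le_of_rle {x y : M} (h : H.rimp x y = H.one) : H.imp x y = H.one := by
  have h1 : H.mul (H.imp x y) x = x := by rw [H.div2, h, H.mul_one]
  have h2 : H.mul (H.imp y x) y = x := by rw [← H.div1]; exact h1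
  calc H.imp x y = H.imp (H.mul (H.imp y x) y) y := by rw [h2]
    _ = H.imp (H.imp y x) (H.imp y y) := H.mul_imp _ _ _
    _ = H.one := by rw [H.imp_self, H.imp_one]

lemma rle_of_le {x y : M} (h : H.imp x y = H.one) : H.rimp x y = H.one := by
  have h1 : H.mul x (H.rimp x y) = x := by rw [← H.div2, h, H.one_mul]
  have h2 : H.mul y (H.rimp y x) = x := by rw [← H.div3]; exact h1
  calc H.rimp x y = H.rimp (H.mul y (H.rimp y x)) y := by rw [h2]
    _ = H.rimp (H.rimp y x) (H.rimp y y) := H.mul_rimp _ _ _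
    _ = H.one := by rw [H.rimp_self, H.rimp_one]

lemma le_trans' {x y z : M} (hxy : H.le x y) (hyz : H.le y z) : H.le x z := by
  unfold le at *
  have h : H.mul (H.imp y x) y = x := by
    have h := H.div1 x y
    rw [hxy, H.one_mul] at h; exact h.symm
  calc H.imp x z = H.imp (H.mul (H.imp y x) y) z := by rw [h]
    _ = H.imp (H.imp y x) (H.imp y z) := H.mul_imp _ _ _
    _ = H.one := by rw [hyz, H.imp_one]

lemma mul_le_left (c y : M) : H.le (H.mul c y) c := by
  apply H.le_of_rle
  rw [H.mul_rimp, H.rimp_self, H.rimp_one]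

end PseudoHoop

theorem basicPseudoHoop_polar_is_filter {M : Type u} (H : PseudoHoop M)
    (hB : H.Basic) (X : Set M) :
    H.IsFilter {x | ∀ a ∈ X, H.IsJoin x a H.one} := by
  refine ⟨?_, ?_, ?_⟩
  · intro a _
    exact ⟨H.imp_self _, H.imp_one a, fun c h1 _ => h1⟩
  · intro x hx y hy a ha
    refine ⟨H.imp_one _, H.imp_one a, ?_⟩
    intro c hxy hac
    -- hxy : (x⊙y) ≤ c.  Set d := y → c; then x ≤ d and a ≤ c ≤ d.
    have hxd : H.le x (H.imp y c) := by
      show H.imp x (H.imp y c) = H.one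
      rw [← H.mul_imp]; exact hxy
    have hcd : H.le c (H.imp y c) := by
      show H.imp c (H.imp y c) = H.one
      rw [← H.mul_imp]; exact H.mul_le_left c y
    have had : H.le a (H.imp y c) := H.le_trans' hac hcd
    have h1d : H.le H.one (H.imp y c) := (hx a ha).2.2 _ hxd had
    have hyc : H.le y c := by
      have : H.imp H.one (H.imp y c) = H.one := h1d
      rw [H.one_imp] at this
      exact this
    exact (hy a ha).2.2 c hyc hac
  · intro x hx y hxy a ha
    refine ⟨H.imp_one _, H.imp_one a, ?_⟩
    intro c hyc hac
    exact (hx a ha).2.2 c (H.le_trans' hxy hyc) hac
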